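/- For the annulus M = {z ∈ ℂ : 1/√R < |z| < √R} with R > 1 equipped with its canonical hyperbolic metric, the ℓ₁-invariant equals π²/ln R, and the infimum is realized by the unit circle traversed once. -/

import Mathlib

open Real

/-- The conformal density of the canonical (Poincaré, curvature `-1`) metric on the annulus
`{1/√R < |z| < √R}`:  `λ(z) = (π/(2 ln R)) / (|z| cos(π ln|z| / (2 ln R)))`. -/
noncomputable def annulusDensity (R : ℝ) (z : ℂ) : ℝ :=
  (π / (2 * Real.log R)) / (‖z‖ * Real.cos (π * Real.log (‖z‖) / (2 * Real.log R)))

/-- The hyperbolic length of a (C¹) curve `γ` on `[0,1]` with respect to the canonical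
metric of the annulus. -/
noncomputable def annulusLength (R : ℝ) (γ : ℝ → ℂ) : ℝ :=
  ∫ t in (0:ℝ)..1, annulusDensity R (γ t) * ‖deriv γ t‖

/-- A closed curve `γ` in `M` is freely null-homotopic (contractible) in `M` if there is a
free homotopy of loops, inside `M`, from `γ` to a constant. -/
def NullHomotopicLoopIn (M : Set ℂ) (γ : ℝ → ℂ) : Prop :=
  ∃ (H : ℝ × ℝ → ℂ) (c : ℂ),
    ContinuousOn H (Set.Icc 0 1 ×ˢ Set.Icc 0 1) ∧
    (∀ p ∈ Set.Icc (0:ℝ) 1 ×ˢ Set.Icc (0:ℝ) 1, H p ∈ M) ∧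
    (∀ t ∈ Set.Icc (0:ℝ) 1, H (t, 0) = γ t) ∧
    (∀ t ∈ Set.Icc (0:ℝ) 1, H (t, 1) = c) ∧
    (∀ s ∈ Set.Icc (0:ℝ) 1, H (0, s) = H (1, s))

/-- The `ℓ₁`-invariant of the annulus with its canonical hyperbolic metric: the infimum
of hyperbolic lengths of non-contractible closed (C¹) curves in it. -/
noncomputable def ellOneAnnulus (R : ℝ) (M : Set ℂ) : ENNReal :=
  sInf { L : ENNReal | ∃ γ : ℝ → ℂ, ContDiffOn ℝ 1 γ (Set.Icc 0 1) ∧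
    (∀ t ∈ Set.Icc (0:ℝ) 1, γ t ∈ M) ∧ γ 0 = γ 1 ∧ ¬ NullHomotopicLoopIn M γ ∧
    L = ENNReal.ofReal (annulusLength R γ) }


lemma sqrtR_eq {R : ℝ} (hR : 1 < R) : Real.sqrt R = Real.exp (Real.log R / 2) := by
  have h0 : (0:ℝ) < R := by linarith
  have h : (Real.exp (Real.log R / 2)) ^ 2 = R := by
    rw [← Real.exp_nat_mul]
    push_cast
    rw [show (2:ℝ) * (Real.log R / 2) = Real.log R by ring, Real.exp_log h0]
  conv_lhs => rw [← h]
  rw [Real.sqrt_sq (Real.exp_nonneg _)]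

lemma inv_sqrtR_eq {R : ℝ} (hR : 1 < R) :
    1 / Real.sqrt R = Real.exp (-(Real.log R / 2)) := by
  rw [sqrtR_eq hR, Real.exp_neg, one_div]

lemma memM_iff {R : ℝ} (hR : 1 < R) {z : ℂ} :
    (1 / Real.sqrt R < ‖z‖ ∧ ‖z‖ < Real.sqrt R) ↔
    (0 < ‖z‖ ∧ |Real.log (‖z‖)| < Real.log R / 2) := by
  rw [inv_sqrtR_eq hR, sqrtR_eq hR, abs_lt]
  constructor
  · rintro ⟨h1, h2⟩
    have hz : 0 < ‖z‖ := lt_trans (Real.exp_pos _) h1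
    refine ⟨hz, ?_, ?_⟩
    · rwa [← Real.exp_lt_exp, Real.exp_log hz]
    · rwa [← Real.exp_lt_exp, Real.exp_log hz]
  · rintro ⟨hz, h1, h2⟩
    rw [← Real.exp_log hz]
    exact ⟨Real.exp_lt_exp.2 h1, Real.exp_lt_exp.2 h2⟩


lemma cos_pos_of_mem {R : ℝ} (hR : 1 < R) {z : ℂ}
    (h : |Real.log (‖z‖)| < Real.log R / 2) :
    0 < Real.cos (π * Real.log (‖z‖) / (2 * Real.log R)) := by
  have hL : 0 < Real.log R := Real.log_pos hR
  have hpi := Real.pi_pos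
  rw [abs_lt] at h
  apply Real.cos_pos_of_mem_Ioo
  constructor
  · rw [neg_lt, ← neg_div, div_lt_iff₀ (by positivity : (0:ℝ) < 2 * Real.log R)]
    nlinarith [h.1]
  · rw [div_lt_iff₀ (by positivity : (0:ℝ) < 2 * Real.log R)]
    nlinarith [h.2]

lemma density_ge {R : ℝ} (hR : 1 < R) {z : ℂ} (hz : 0 < ‖z‖)
    (h : |Real.log (‖z‖)| < Real.log R / 2) :
    (π / (2 * Real.log R)) / ‖z‖ ≤ annulusDensity R z := by
  have hL : 0 < Real.log R := Real.log_pos hR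
  have hc := cos_pos_of_mem hR h
  have hc1 : Real.cos (π * Real.log (‖z‖) / (2 * Real.log R)) ≤ 1 := Real.cos_le_one _
  unfold annulusDensity
  apply div_le_div_of_nonneg_left (by positivity) (by positivity)
  nlinarith

lemma density_pos {R : ℝ} (hR : 1 < R) {z : ℂ} (hz : 0 < ‖z‖)
    (h : |Real.log (‖z‖)| < Real.log R / 2) : 0 < annulusDensity R z := by
  have hL : 0 < Real.log R := Real.log_pos hR
  have hc := cos_pos_of_mem hR h
  unfold annulusDensity
  positivity


lemma gamma0_abs (t : ℝ) : ‖Complex.exp (2 * π * t * Complex.I)‖ = 1 := by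
  rw [Complex.norm_exp]
  simp [Complex.mul_re]

lemma gamma0_hasDerivAt (t : ℝ) :
    HasDerivAt (fun t : ℝ => Complex.exp (2 * π * t * Complex.I))
      (Complex.exp (2 * π * t * Complex.I) * (2 * π * Complex.I)) t := by
  have h0 : HasDerivAt (fun t : ℝ => ((t : ℂ))) 1 t := Complex.ofRealCLM.hasDerivAt
  have h1 : HasDerivAt (fun t : ℝ => (2 * (π:ℂ) * (t:ℂ)) * Complex.I)
      ((2 * (π:ℂ) * 1) * Complex.I) t := (h0.const_mul (2 * (π:ℂ))).mul_const Complex.I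
  have := h1.cexp
  simpa using this.congr_deriv (by ring)

lemma gamma0_contDiff : ContDiff ℝ 1 (fun t : ℝ => Complex.exp (2 * π * t * Complex.I)) := by
  have h : ContDiff ℝ 1 (fun t : ℝ => (2 * (π:ℂ) * (t:ℂ)) * Complex.I) := by
    exact (contDiff_const.mul Complex.ofRealCLM.contDiff).mul contDiff_const
  exact (Complex.contDiff_exp (𝕜 := ℝ)).comp h

lemma gamma0_deriv (t : ℝ) :
    deriv (fun t : ℝ => Complex.exp (2 * π * t * Complex.I)) t
      = Complex.exp (2 * π * t * Complex.I) * (2 * π * Complex.I) :=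
  (gamma0_hasDerivAt t).deriv

lemma gamma0_length {R : ℝ} (hR : 1 < R) :
    annulusLength R (fun t : ℝ => Complex.exp (2 * π * t * Complex.I)) = π ^ 2 / Real.log R := by
  have hL : 0 < Real.log R := Real.log_pos hR
  have hpi := Real.pi_pos
  unfold annulusLength
  have : ∀ t : ℝ, annulusDensity R ((fun t : ℝ => Complex.exp (2 * π * t * Complex.I)) t)
      * ‖deriv (fun t : ℝ => Complex.exp (2 * π * t * Complex.I)) t‖ = π ^ 2 / Real.log R := by
    intro t
    rw [gamma0_deriv]
    unfold annulusDensity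
    rw [gamma0_abs]
    simp only [Real.log_one, mul_zero, zero_div, Real.cos_zero, mul_one, one_mul]
    rw [norm_mul]
    simp only [gamma0_abs, one_mul]
    have : ‖2 * π * Complex.I‖ = 2 * π := by
      simp [abs_of_pos hpi]
    rw [this]
    field_simp
  simp only [this]
  simp


/-- The discrete winding-number argument: the unit circle loop is not null-homotopic in any
subset of `ℂ \ {0}`. -/
lemma gamma0_not_nullhomotopic {M : Set ℂ} (hM : ∀ z ∈ M, z ≠ 0) :
    ¬ NullHomotopicLoopIn M (fun t : ℝ => Complex.exp (2 * π * t * Complex.I)) := by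
  have hpi := Real.pi_pos
  rintro ⟨H, c, Hcont, Hmem, H0, H1, Hper⟩
  set Q : Set (ℝ × ℝ) := Set.Icc (0:ℝ) 1 ×ˢ Set.Icc (0:ℝ) 1 with hQdef
  have hQc : IsCompact Q := isCompact_Icc.prod isCompact_Icc
  have hQne : Q.Nonempty := ⟨(0,0), by constructor <;> constructor <;> norm_num⟩
  have hHne : ∀ p ∈ Q, H p ≠ 0 := fun p hp => hM _ (Hmem p hp)
  -- minimum of |H| on Q
  have habs : ContinuousOn (fun p => ‖H p‖) Q :=
    continuous_norm.comp_continuousOn Hcont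
  obtain ⟨p₀, hp₀Q, hp₀⟩ := hQc.exists_isMinOn hQne habs
  set δ := ‖H p₀‖ with hδdef
  have hδ : 0 < δ := by
    rw [hδdef]
    exact norm_pos_iff.mpr (hHne _ hp₀Q)
  have hδle : ∀ p ∈ Q, δ ≤ ‖H p‖ := fun p hp => hp₀ hp
  -- uniform continuity
  have hUC := hQc.uniformContinuousOn_of_continuous Hcont
  rw [Metric.uniformContinuousOn_iff] at hUC
  obtain ⟨η, hη, hUC⟩ := hUC δ hδ
  -- the grid size
  obtain ⟨N₀, hN₀⟩ := exists_nat_gt (1 / η)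
  set N : ℕ := max N₀ 2 with hNdef
  have hN2 : 2 ≤ N := le_max_right _ _
  have hNpos : (0:ℝ) < N := by positivity
  have hNη : 1 / (N:ℝ) < η := by
    rw [div_lt_iff₀ hNpos]
    have h1 : 1 / η < (N:ℝ) := lt_of_lt_of_le hN₀ (by exact_mod_cast le_max_left N₀ 2)
    calc (1:ℝ) = η * (1/η) := by field_simp
    _ < η * N := by exact (mul_lt_mul_iff_right₀ hη).2 h1
  -- grid points are in [0,1]
  have hgrid : ∀ j : ℕ, j ≤ N → (j:ℝ)/N ∈ Set.Icc (0:ℝ) 1 := by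
    intro j hj
    constructor
    · positivity
    · rw [div_le_one hNpos]; exact_mod_cast hj
  have hgridQ : ∀ (j : ℕ), j ≤ N → ∀ s ∈ Set.Icc (0:ℝ) 1, ((j:ℝ)/N, s) ∈ Q :=
    fun j hj s hs => ⟨hgrid j hj, hs⟩
  -- the ratios
  set r : ℕ → ℝ → ℂ := fun j s => H (((j:ℝ)+1)/N, s) / H ((j:ℝ)/N, s) with hrdef
  have hcast : ∀ j : ℕ, ((j:ℝ)+1) = ((j+1 : ℕ) : ℝ) := by intro j; push_cast; ring
  have hne : ∀ j < N, ∀ s ∈ Set.Icc (0:ℝ) 1, H (((j:ℝ))/N, s) ≠ 0 := by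
    intro j hj s hs
    exact hHne _ (hgridQ j hj.le s hs)
  have hne' : ∀ j < N, ∀ s ∈ Set.Icc (0:ℝ) 1, H (((j:ℝ)+1)/N, s) ≠ 0 := by
    intro j hj s hs
    rw [hcast j]
    exact hHne _ (hgridQ (j+1) hj s hs)
  have hrne : ∀ j < N, ∀ s ∈ Set.Icc (0:ℝ) 1, r j s ≠ 0 := by
    intro j hj s hs
    exact div_ne_zero (hne' j hj s hs) (hne j hj s hs)
  -- ratios are close to 1
  have hrclose : ∀ j < N, ∀ s ∈ Set.Icc (0:ℝ) 1, ‖r j s - 1‖ < 1 := by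
    intro j hj s hs
    have hQ1 : (((j:ℝ)+1)/N, s) ∈ Q := by rw [hcast j]; exact hgridQ (j+1) hj s hs
    have hQ2 : (((j:ℝ))/N, s) ∈ Q := hgridQ j hj.le s hs
    have hd : dist ((((j:ℝ)+1)/N, s) : ℝ × ℝ) (((j:ℝ))/N, s) < η := by
      rw [Prod.dist_eq]
      simp only [dist_self]
      rw [max_eq_left dist_nonneg, Real.dist_eq]
      have : ((j:ℝ)+1)/N - (j:ℝ)/N = 1/N := by field_simp; ring
      rw [this, abs_of_pos (by positivity)]
      exact hNη
    have hHd : dist (H (((j:ℝ)+1)/N, s)) (H (((j:ℝ))/N, s)) < δ := hUC _ hQ1 _ hQ2 hd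
    have hb := hne j hj s hs
    rw [hrdef]
    have : H (((j:ℝ)+1)/N, s) / H (((j:ℝ))/N, s) - 1
        = (H (((j:ℝ)+1)/N, s) - H (((j:ℝ))/N, s)) / H (((j:ℝ))/N, s) := by
      field_simp
    rw [this, norm_div]
    rw [div_lt_one (norm_pos_iff.mpr hb)]
    calc ‖H (((j:ℝ)+1)/N, s) - H (((j:ℝ))/N, s)‖ < δ := by
          rw [← dist_eq_norm]; exact hHd
      _ ≤ ‖H (((j:ℝ))/N, s)‖ := hδle _ hQ2
  have hrslit : ∀ j < N, ∀ s ∈ Set.Icc (0:ℝ) 1, r j s ∈ Complex.slitPlane := by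
    intro j hj s hs
    have := Complex.mem_slitPlane_of_norm_lt_one (hrclose j hj s hs)
    simpa using this
  -- the winding sum
  set w : ℝ → ℂ := fun s => ∑ j ∈ Finset.range N, Complex.log (r j s) with hwdef
  -- continuity
  have hline : ∀ (t : ℝ), t ∈ Set.Icc (0:ℝ) 1 →
      ContinuousOn (fun s : ℝ => H (t, s)) (Set.Icc (0:ℝ) 1) := by
    intro t ht
    apply Hcont.comp (Continuous.continuousOn (by fun_prop))
    intro s hs
    exact ⟨ht, hs⟩
  have hwcont : ContinuousOn w (Set.Icc (0:ℝ) 1) := by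
    apply continuousOn_finset_sum
    intro j hj
    rw [Finset.mem_range] at hj
    have hrcont : ContinuousOn (r j) (Set.Icc (0:ℝ) 1) := by
      apply ContinuousOn.div
      · have := hline (((j:ℝ)+1)/N) (by rw [hcast j]; exact hgrid (j+1) hj)
        exact this
      · exact hline ((j:ℝ)/N) (hgrid j hj.le)
      · exact fun s hs => hne j hj s hs
    intro s hs
    exact (continuousAt_clog (hrslit j hj s hs)).comp_continuousWithinAt
      (hrcont.continuousWithinAt hs)
  -- telescoping: exp (w s) = 1
  have h0Q : ∀ s ∈ Set.Icc (0:ℝ) 1, ((0:ℝ), s) ∈ Q := fun s hs => ⟨by norm_num, hs⟩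
  have htel : ∀ s ∈ Set.Icc (0:ℝ) 1, ∀ k, k ≤ N →
      ∏ j ∈ Finset.range k, r j s = H ((k:ℝ)/N, s) / H (0, s) := by
    intro s hs k
    induction k with
    | zero =>
      intro _
      simp only [Finset.prod_range_zero, Nat.cast_zero, zero_div]
      exact (div_self (hHne _ (h0Q s hs))).symm
    | succ k ih =>
      intro hk
      have hk' : k < N := hk
      rw [Finset.prod_range_succ, ih hk'.le]
      have h1 := hne k hk' s hs
      have h2 := hHne _ (h0Q s hs)
      have h3 := hne' k hk' s hs
      have hc : ((k+1:ℕ):ℝ) = (k:ℝ)+1 := by push_cast; ring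
      rw [hc, hrdef]
      field_simp
  have hexpw : ∀ s ∈ Set.Icc (0:ℝ) 1, Complex.exp (w s) = 1 := by
    intro s hs
    simp only [hwdef]
    rw [Complex.exp_sum]
    have heq : ∀ j ∈ Finset.range N, Complex.exp (Complex.log (r j s)) = r j s :=
      fun j hj => Complex.exp_log (hrne j (Finset.mem_range.1 hj) s hs)
    rw [Finset.prod_congr rfl heq, htel s hs N le_rfl]
    have hNN : ((N:ℝ))/(N:ℝ) = 1 := div_self (ne_of_gt hNpos)
    rw [hNN, ← Hper s hs]
    exact div_self (hHne _ (h0Q s hs))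
  have hwint : ∀ s ∈ Set.Icc (0:ℝ) 1, ∃ n : ℤ, w s = n * (2 * π * Complex.I) :=
    fun s hs => Complex.exp_eq_one_iff.mp (hexpw s hs)
  -- value at s = 0
  have hNne : ((N:ℂ)) ≠ 0 := by exact_mod_cast ne_of_gt hNpos
  have hw0 : w 0 = 2 * (π:ℂ) * Complex.I := by
    have h0mem : (0:ℝ) ∈ Set.Icc (0:ℝ) 1 := by norm_num
    have hterm : ∀ j ∈ Finset.range N, Complex.log (r j 0)
        = ((2 * π / (N:ℝ) : ℝ) : ℂ) * Complex.I := by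
      intro j hj
      have hj' := Finset.mem_range.1 hj
      have e1 := H0 (((j+1:ℕ):ℝ)/N) (hgrid (j+1) hj')
      have e2 := H0 (((j:ℕ):ℝ)/N) (hgrid j hj'.le)
      simp only at e1 e2
      have hr0 : r j 0 = Complex.exp (((2 * π / (N:ℝ) : ℝ) : ℂ) * Complex.I) := by
        simp only [hrdef]
        rw [hcast j, e1, e2, ← Complex.exp_sub]
        congr 1
        push_cast
        field_simp
        ring
      rw [hr0]
      apply Complex.log_exp
      · have him : (((2 * π / (N:ℝ) : ℝ) : ℂ) * Complex.I).im = 2 * π / (N:ℝ) := by simp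
        rw [him]
        have : (0:ℝ) < 2 * π / N := by positivity
        linarith
      · have him : (((2 * π / (N:ℝ) : ℝ) : ℂ) * Complex.I).im = 2 * π / (N:ℝ) := by simp
        rw [him, div_le_iff₀ hNpos]
        have h2 : (2:ℝ) ≤ N := by exact_mod_cast hN2
        nlinarith
    simp only [hwdef]
    rw [Finset.sum_congr rfl hterm, Finset.sum_const, Finset.card_range, nsmul_eq_mul]
    push_cast
    field_simp
  -- value at s = 1
  have hc0 : c ≠ 0 := by
    have h01 : (0:ℝ) ∈ Set.Icc (0:ℝ) 1 := by norm_num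
    have h11 : (1:ℝ) ∈ Set.Icc (0:ℝ) 1 := by norm_num
    have := H1 0 h01
    rw [← this]
    exact hHne _ ⟨h01, h11⟩
  have hw1 : w 1 = 0 := by
    have h1mem : (1:ℝ) ∈ Set.Icc (0:ℝ) 1 := by norm_num
    simp only [hwdef]
    apply Finset.sum_eq_zero
    intro j hj
    have hj' := Finset.mem_range.1 hj
    have e1 : H (((j+1:ℕ):ℝ)/N, 1) = c := H1 _ (hgrid (j+1) hj')
    have e2 : H (((j:ℕ):ℝ)/N, 1) = c := H1 _ (hgrid j hj'.le)
    simp only [hrdef]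
    rw [hcast j, e1, e2, div_self hc0, Complex.log_one]
  -- intermediate value argument
  set v : ℝ → ℝ := fun s => (w s).im with hvdef
  have hvcont : ContinuousOn v (Set.Icc (0:ℝ) 1) :=
    Complex.continuous_im.comp_continuousOn hwcont
  have hv0 : v 0 = 2 * π := by rw [hvdef]; simp [hw0]
  have hv1 : v 1 = 0 := by rw [hvdef]; simp [hw1]
  have hsub : Set.Icc (v 1) (v 0) ⊆ v '' Set.Icc (0:ℝ) 1 :=
    intermediate_value_Icc' zero_le_one hvcont
  have hπmem : π ∈ Set.Icc (v 1) (v 0) := by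
    rw [hv0, hv1]
    constructor <;> nlinarith
  obtain ⟨s, hs, hvs⟩ := hsub hπmem
  obtain ⟨n, hn⟩ := hwint s hs
  have him : v s = (n:ℝ) * (2 * π) := by
    simp only [hvdef]
    rw [hn]
    simp
  rw [hvs] at him
  have h2n : (2 * (n:ℝ)) = 1 := by
    apply mul_right_cancel₀ (ne_of_gt hpi)
    linear_combination -him
  have : (2 * n : ℤ) = 1 := by exact_mod_cast h2n
  omega


section Lower

open intervalIntegral MeasureTheory

lemma lower_bound {R : ℝ} (hR : 1 < R) {M : Set ℂ}
    (hM : M = {z : ℂ | 1 / Real.sqrt R < ‖z‖ ∧ ‖z‖ < Real.sqrt R})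
    {γ : ℝ → ℂ} (hγ : ContDiffOn ℝ 1 γ (Set.Icc 0 1))
    (hmem : ∀ t ∈ Set.Icc (0:ℝ) 1, γ t ∈ M) (hclosed : γ 0 = γ 1)
    (hnot : ¬ NullHomotopicLoopIn M γ) :
    π ^ 2 / Real.log R ≤ annulusLength R γ := by
  have hpi := Real.pi_pos
  have hL : 0 < Real.log R := Real.log_pos hR
  have hmem' : ∀ t ∈ Set.Icc (0:ℝ) 1,
      0 < ‖γ t‖ ∧ |Real.log (‖γ t‖)| < Real.log R / 2 := by
    intro t ht
    have h := hmem t ht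
    rw [hM] at h
    exact (memM_iff hR).mp h
  have hγne : ∀ t ∈ Set.Icc (0:ℝ) 1, γ t ≠ 0 := by
    intro t ht
    have h := (hmem' t ht).1
    intro h0
    rw [h0] at h
    simp at h
  -- the clamp function
  set c : ℝ → ℝ := fun u => max 0 (min 1 u) with hcdef
  have hccont : Continuous c := by fun_prop
  have hcmem : ∀ u, c u ∈ Set.Icc (0:ℝ) 1 :=
    fun u => ⟨le_max_left _ _, max_le zero_le_one (min_le_left _ _)⟩
  have hcid : ∀ u ∈ Set.Icc (0:ℝ) 1, c u = u := by
    rintro u ⟨h0, h1⟩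
    rw [hcdef]
    simp only
    rw [min_eq_right h1, max_eq_right h0]
  -- the derivative of γ within [0,1]
  set g : ℝ → ℂ := derivWithin γ (Set.Icc 0 1) with hgdef
  have hgcont : ContinuousOn g (Set.Icc 0 1) :=
    hγ.continuousOn_derivWithin (uniqueDiffOn_Icc zero_lt_one) le_rfl
  have hγdiff : DifferentiableOn ℝ γ (Set.Icc 0 1) := hγ.differentiableOn one_ne_zero
  -- the logarithmic derivative, clamped
  set φ : ℝ → ℂ := fun u => g (c u) / γ (c u) with hφdef
  have hA : Continuous fun u => g (c u) := hgcont.comp_continuous hccont hcmem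
  have hB : Continuous fun u => γ (c u) := hγ.continuousOn.comp_continuous hccont hcmem
  have hφcont : Continuous φ := hA.div hB fun u => hγne _ (hcmem u)
  -- the primitive
  set f : ℝ → ℂ := fun t => ∫ u in (0:ℝ)..t, φ u with hfdef
  have hfderiv : ∀ t, HasDerivAt f (φ t) t := by
    intro t
    exact intervalIntegral.integral_hasDerivAt_right (hφcont.intervalIntegrable _ _)
      (hφcont.stronglyMeasurableAtFilter _ _) hφcont.continuousAt
  have hfcont : Continuous f := by
    rw [continuous_iff_continuousAt]
    exact fun t => (hfderiv t).continuousAt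
  have hf0 : f 0 = 0 := intervalIntegral.integral_same
  -- γ t = γ 0 * exp (f t) on [0,1]
  have hexpdiff : Differentiable ℝ fun t => Complex.exp (-f t) :=
    fun t => ((hfderiv t).differentiableAt.neg).cexp
  have hFdiff : DifferentiableOn ℝ (fun t => γ t * Complex.exp (-f t)) (Set.Icc 0 1) :=
    hγdiff.mul hexpdiff.differentiableOn
  have hFderiv : ∀ x ∈ Set.Ico (0:ℝ) 1,
      derivWithin (fun t => γ t * Complex.exp (-f t)) (Set.Icc 0 1) x = 0 := by
    intro x hx
    have hx' : x ∈ Set.Icc (0:ℝ) 1 := Set.Ico_subset_Icc_self hx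
    have h1 : HasDerivWithinAt γ (g x) (Set.Icc 0 1) x := (hγdiff x hx').hasDerivWithinAt
    have h2 : HasDerivAt (fun t => Complex.exp (-f t))
        (Complex.exp (-f x) * (-φ x)) x := ((hfderiv x).neg).cexp
    have h3 := h1.mul h2.hasDerivWithinAt
    have hval : g x * Complex.exp (-f x) + γ x * (Complex.exp (-f x) * (-φ x)) = 0 := by
      rw [hφdef]
      simp only
      rw [hcid x hx']
      have := hγne x hx'
      field_simp
      ring
    rw [hval] at h3
    exact h3.derivWithin (uniqueDiffOn_Icc zero_lt_one x hx')
  have hconst := constant_of_derivWithin_zero hFdiff hFderiv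
  have hrep : ∀ t ∈ Set.Icc (0:ℝ) 1, γ t = γ 0 * Complex.exp (f t) := by
    intro t ht
    have h := hconst t ht
    rw [hf0] at h
    simp only [neg_zero, Complex.exp_zero, mul_one] at h
    calc γ t = γ t * Complex.exp (-f t) * Complex.exp (f t) := by
          rw [mul_assoc, ← Complex.exp_add]
          simp
      _ = γ 0 * Complex.exp (f t) := by rw [h]
  -- winding number
  have hexp1 : Complex.exp (f 1) = 1 := by
    have h := hrep 1 (by norm_num)
    rw [← hclosed] at h
    have h0 := hγne 0 (by norm_num)
    field_simp at h
    tauto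
  obtain ⟨n, hn⟩ := Complex.exp_eq_one_iff.mp hexp1
  -- if n = 0 then γ is null-homotopic, contradiction
  have hn0 : n ≠ 0 := by
    intro h0
    rw [h0] at hn
    simp only [Int.cast_zero, zero_mul] at hn
    apply hnot
    refine ⟨fun p => γ 0 * Complex.exp ((1 - (p.2 : ℂ)) * f p.1), γ 0, ?_, ?_, ?_, ?_, ?_⟩
    · apply Continuous.continuousOn
      fun_prop
    · rintro ⟨t, s⟩ ⟨ht, hs⟩
      rw [hM]
      have hcomb : ∀ x y u : ℝ, 0 ≤ u → u ≤ 1 →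
          min x y ≤ u*x + (1-u)*y ∧ u*x + (1-u)*y ≤ max x y := by
        intro x y u h0 h1
        rcases le_total x y with h|h
        · rw [min_eq_left h, max_eq_right h]
          constructor <;> nlinarith
        · rw [min_eq_right h, max_eq_left h]
          constructor <;> nlinarith
      have hb0 := hmem' 0 (by norm_num)
      have hbt := hmem' t ht
      rw [hrep t ht] at hbt
      set a := Real.log (‖γ 0‖) with hadef
      set b := (f t).re with hbdef
      have habst : ‖γ 0 * Complex.exp (f t)‖
          = ‖γ 0‖ * Real.exp b := by
        rw [norm_mul, Complex.norm_exp]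
      rw [habst, Real.log_mul (ne_of_gt hb0.1) (Real.exp_ne_zero _), Real.log_exp] at hbt
      have hab : |a + b| < Real.log R / 2 := hbt.2
      have ha : |a| < Real.log R / 2 := hb0.2
      rw [abs_lt] at hab ha
      have hHval : ‖γ 0 * Complex.exp ((1 - (s:ℂ)) * f t)‖
          = Real.exp (a + (1-s) * b) := by
        rw [norm_mul, Complex.norm_exp]
        have hre : ((1 - (s:ℂ)) * f t).re = (1-s) * b := by
          simp [Complex.mul_re, Complex.sub_re, Complex.sub_im, Complex.one_re,
            Complex.one_im, Complex.ofReal_re, Complex.ofReal_im, hbdef]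
        rw [hre]
        conv_lhs => rw [← Real.exp_log hb0.1, ← Real.exp_add]
      have hkey := hcomb a (a + b) s hs.1 hs.2
      have heq : s * a + (1 - s) * (a + b) = a + (1-s) * b := by ring
      rw [heq] at hkey
      constructor
      · rw [inv_sqrtR_eq hR, hHval]
        apply Real.exp_lt_exp.2
        have h1 : -(Real.log R / 2) < min a (a + b) := lt_min ha.1 hab.1
        linarith [hkey.1]
      · rw [sqrtR_eq hR, hHval]
        apply Real.exp_lt_exp.2
        have h1 : max a (a + b) < Real.log R / 2 := max_lt ha.2 hab.2
        linarith [hkey.2]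
    · intro t ht
      simp only [Complex.ofReal_zero, sub_zero, one_mul]
      exact (hrep t ht).symm
    · intro t ht
      simp only [Complex.ofReal_one, sub_self, zero_mul, Complex.exp_zero, mul_one]
    · intro s hs
      simp only [hf0, hn, mul_zero, Complex.exp_zero]
  -- the length estimate
  have habs_n : 2*π ≤ ‖f 1‖ := by
    rw [hn]
    have hv : ‖(n:ℂ) * (2*(π:ℂ)*Complex.I)‖ = |(n:ℝ)| * (2*π) := by
      simp only [norm_mul, Complex.norm_intCast, Complex.norm_I,
        Complex.norm_two, Complex.norm_real, Real.norm_eq_abs, mul_one]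
      rw [abs_of_pos hpi]
    rw [hv]
    have h1 : (1:ℝ) ≤ |(n:ℝ)| := by
      have := Int.one_le_abs hn0
      exact_mod_cast this
    nlinarith
  -- a.e. rewriting of the integrand
  set ψ : ℝ → ℝ := fun t => annulusDensity R (γ (c t)) * ‖g (c t)‖ with hψdef
  have hnull : (volume : Measure ℝ) ({(1:ℝ)} : Set ℝ) = 0 := by simp
  have hae : ∀ᵐ x ∂(volume : Measure ℝ), x ∈ Set.uIoc (0:ℝ) 1 →
      annulusDensity R (γ x) * ‖deriv γ x‖ = ψ x := by
    have hnm : ∀ᵐ x ∂(volume : Measure ℝ), x ∉ ({(1:ℝ)} : Set ℝ) :=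
      MeasureTheory.measure_eq_zero_iff_ae_notMem.mp hnull
    filter_upwards [hnm] with x hx hxI
    rw [Set.uIoc_of_le zero_le_one] at hxI
    have hx1 : x < 1 := lt_of_le_of_ne hxI.2 (by simpa using hx)
    have hxo : x ∈ Set.Ioo (0:ℝ) 1 := ⟨hxI.1, hx1⟩
    have hxc : x ∈ Set.Icc (0:ℝ) 1 := ⟨le_of_lt hxo.1, le_of_lt hxo.2⟩
    rw [hψdef]
    simp only
    rw [hcid x hxc, hgdef, derivWithin_of_mem_nhds (Icc_mem_nhds hxo.1 hxo.2)]
  have step1 : annulusLength R γ = ∫ t in (0:ℝ)..1, ψ t := by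
    unfold annulusLength
    exact intervalIntegral.integral_congr_ae hae
  -- continuity of the two integrands
  have hCabs : Continuous fun t => ‖γ (c t)‖ := continuous_norm.comp hB
  have habspos : ∀ t : ℝ, 0 < ‖γ (c t)‖ := fun t => (hmem' _ (hcmem t)).1
  have hψcont : Continuous ψ := by
    rw [hψdef]
    apply Continuous.mul ?_ hA.norm
    unfold annulusDensity
    apply Continuous.div continuous_const
    · apply Continuous.mul hCabs
      apply Real.continuous_cos.comp
      apply Continuous.div_const
      apply continuous_const.mul
      exact Real.continuousOn_log.comp_continuous hCabs fun t => by
        simpa using ne_of_gt (habspos t)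
    · intro t
      exact ne_of_gt (mul_pos (habspos t) (cos_pos_of_mem hR (hmem' _ (hcmem t)).2))
  have hlowcont : Continuous fun t => π/(2*Real.log R) * ‖φ t‖ :=
    continuous_const.mul hφcont.norm
  -- pointwise comparison
  have hptwise : ∀ x ∈ Set.Icc (0:ℝ) 1, π/(2*Real.log R) * ‖φ x‖ ≤ ψ x := by
    intro x _
    rw [hψdef, hφdef]
    simp only
    rw [norm_div]
    have hd := density_ge hR (habspos x) (hmem' _ (hcmem x)).2
    calc π/(2*Real.log R) * (‖g (c x)‖ / ‖γ (c x)‖)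
        = (π/(2*Real.log R) / ‖γ (c x)‖) * ‖g (c x)‖ := by
                    ring
      _ ≤ annulusDensity R (γ (c x)) * ‖g (c x)‖ :=
          mul_le_mul_of_nonneg_right hd (norm_nonneg _)
  calc π^2/Real.log R = π/(2*Real.log R) * (2*π) := by
        field_simp
    _ ≤ π/(2*Real.log R) * ‖f 1‖ :=
        mul_le_mul_of_nonneg_left habs_n (by positivity)
    _ ≤ π/(2*Real.log R) * ∫ t in (0:ℝ)..1, ‖φ t‖ := by
        apply mul_le_mul_of_nonneg_left ?_ (by positivity)
        rw [hfdef]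
        exact intervalIntegral.norm_integral_le_integral_norm zero_le_one
    _ = ∫ t in (0:ℝ)..1, π/(2*Real.log R) * ‖φ t‖ :=
        (intervalIntegral.integral_const_mul _ _).symm
    _ ≤ ∫ t in (0:ℝ)..1, ψ t :=
        intervalIntegral.integral_mono_on zero_le_one
          (hlowcont.intervalIntegrable _ _) (hψcont.intervalIntegrable _ _) hptwise
    _ = annulusLength R γ := step1.symm

end Lower


/-- For the annulus `M = {1/√R < |z| < √R}`, `R > 1`, with its canonical hyperbolic metric,
the `ℓ₁`-invariant equals `π²/ln R`, and the infimum is realized by the unit circle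
traversed once. -/
theorem ellOne_annulus_eq (R : ℝ) (hR : 1 < R)
    (M : Set ℂ) (hM : M = {z : ℂ | 1 / Real.sqrt R < ‖z‖ ∧ ‖z‖ < Real.sqrt R}) :
    ellOneAnnulus R M = ENNReal.ofReal (π ^ 2 / Real.log R) ∧
    (let γ₀ : ℝ → ℂ := fun t => Complex.exp (2 * π * t * Complex.I);
      ContDiffOn ℝ 1 γ₀ (Set.Icc 0 1) ∧ (∀ t ∈ Set.Icc (0:ℝ) 1, γ₀ t ∈ M) ∧ γ₀ 0 = γ₀ 1 ∧
      ¬ NullHomotopicLoopIn M γ₀ ∧ annulusLength R γ₀ = π ^ 2 / Real.log R) := by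
  have hpi := Real.pi_pos
  have hL : 0 < Real.log R := Real.log_pos hR
  have hsq : 1 < Real.sqrt R := by
    rw [show (1:ℝ) = Real.sqrt 1 by simp]
    exact Real.sqrt_lt_sqrt (by norm_num) hR
  have hmem₀ : ∀ t ∈ Set.Icc (0:ℝ) 1, Complex.exp (2 * π * t * Complex.I) ∈ M := by
    intro t _
    rw [hM]
    refine ⟨?_, ?_⟩ <;> rw [gamma0_abs t]
    · rw [div_lt_one (by positivity)]
      exact hsq
    · exact hsq
  have hclosed : Complex.exp (2 * π * (0:ℝ) * Complex.I) = Complex.exp (2 * π * (1:ℝ) * Complex.I) := by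
    norm_num
  have hMne : ∀ z ∈ M, z ≠ 0 := by
    intro z hz
    rw [hM] at hz
    have := ((memM_iff hR).mp hz).1
    intro h0
    rw [h0] at this
    simp at this
  have hnot := gamma0_not_nullhomotopic hMne
  have hlen := gamma0_length hR (R := R)
  have hprops : ContDiffOn ℝ 1 (fun t : ℝ => Complex.exp (2 * π * t * Complex.I)) (Set.Icc 0 1) :=
    gamma0_contDiff.contDiffOn
  constructor
  · apply le_antisymm
    · apply sInf_le
      exact ⟨fun t : ℝ => Complex.exp (2 * π * t * Complex.I), hprops, hmem₀, hclosed, hnot,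
        by rw [hlen]⟩
    · apply le_sInf
      rintro L ⟨γ, h1, h2, h3, h4, rfl⟩
      exact ENNReal.ofReal_le_ofReal (lower_bound hR hM h1 h2 h3 h4)
  · exact ⟨hprops, hmem₀, hclosed, hnot, hlen⟩
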